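/- Let q = 2^e with e odd, e ≥ 3, and s = 2^{(e+1)/2}. Define Γ_ε : E → E by Γ_ε(u) = (u + (u^q + u)ε)^{s+2} + (u^q + u)^s + (u^{2q} + u²)ε + u^{q+1} + u². Then for all x1, x2 ∈ F, Γ_ε(ι(x1) + ε·ι(x2)) = ι(x1^{s+2} + x1·x2 + x2^s). -/

import Mathlib

/-!
Since `ε² + ε ∈ F`, the element `c = ε^q + ε` satisfies `c² = c`, and `c ≠ 0` because `ε ∉ F` and
the fixed points of `x ↦ x^q` are the `q` roots of `X^q - X` lying in `F`. So `ε^q = ε + 1`, hence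
`u = x1 + ε x2` satisfies `u^q + u = x2` and `u + (u^q + u) ε = x1`, and substituting these two
relations into `Γ_ε` leaves `x1^{s+2} + x1 x2 + x2^s`.
-/

open Polynomial

theorem two_eq_zero_of_card_eq_two_pow {F : Type*} [Field F] [Fintype F] {e : ℕ}
    (hF : Fintype.card F = 2 ^ e) : (2 : F) = 0 :=
  eq_zero_of_pow_eq_zero (by exact_mod_cast hF ▸ FiniteField.cast_card_eq_zero F : (2 : F) ^ e = 0)

theorem RingHom.mem_range_of_pow_card_eq_self {F E : Type*} [Field F] [Fintype F] [Field E]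
    (ι : F →+* E) {x : E} (hx : x ^ Fintype.card F = x) : x ∈ Set.range ι := by
  classical
  set P : F[X] := X ^ Fintype.card F - X
  have hP : P ≠ 0 := FiniteField.X_pow_card_sub_X_ne_zero F Fintype.one_lt_card
  have hroots : Multiset.card P.roots = P.natDegree := by
    rw [FiniteField.roots_X_pow_card_sub_X, FiniteField.X_pow_card_sub_X_natDegree_eq F
      Fintype.one_lt_card]
    rfl
  have hxP : x ∈ (P.map ι).roots := by
    rw [mem_roots (map_ne_zero hP)]
    simp [P, hx]
  rw [← roots_map_of_injective_of_card_eq_natDegree ι.injective hroots] at hxP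
  obtain ⟨a, -, rfl⟩ := Multiset.mem_map.mp hxP
  exact ⟨a, rfl⟩

theorem pow_card_eq_add_one_of_sq_add_self_mem_range {F E : Type*} [Field F] [Fintype F]
    [Field E] [CharP E 2] {e : ℕ} (hF : Fintype.card F = 2 ^ e) (ι : F →+* E) {δ : F} {ε : E}
    (hε : ε ∉ Set.range ι) (hεδ : ε ^ 2 + ε = ι δ) : ε ^ Fintype.card F = ε + 1 := by
  have h2 : (2 : E) = 0 := CharTwo.two_eq_zero
  set c := ε ^ Fintype.card F + ε
  have hfrob : ∀ x y : E, (x + y) ^ Fintype.card F = x ^ Fintype.card F + y ^ Fintype.card F := by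
    rw [hF]
    exact fun x y ↦ add_pow_char_pow x y 2 e
  have hδ : ι δ ^ Fintype.card F = ι δ := by rw [← map_pow, FiniteField.pow_card]
  have hc_sq : c ^ 2 = c := by
    have hε_sq : ε ^ 2 = ι δ + ε := CharTwo.eq_add_iff_add_eq.mpr hεδ
    calc c ^ 2 = (ε ^ 2) ^ Fintype.card F + ε ^ 2 := by
          rw [CharTwo.add_sq, ← pow_mul, ← pow_mul, mul_comm]
      _ = c := by
          rw [hε_sq, hfrob, hδ]
          linear_combination ι δ * h2
  have hc_ne : c ≠ 0 := fun h ↦ hε (ι.mem_range_of_pow_card_eq_self (CharTwo.add_eq_zero.mp h))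
  have hc : c = 1 := mul_left_cancel₀ hc_ne (by rw [mul_one, ← sq, hc_sq])
  linear_combination hc - ε * h2

theorem bt_form_eq {R : Type*} [CommRing R] [CharP R 2] {q : ℕ} (s : ℕ) {u ε a b : R}
    (hb : u ^ q + u = b) (ha : u + b * ε = a) :
    (u + (u ^ q + u) * ε) ^ (s + 2) + (u ^ q + u) ^ s + (u ^ (2 * q) + u ^ 2) * ε
      + u ^ (q + 1) + u ^ 2 = a ^ (s + 2) + a * b + b ^ s := by
  have h2q : u ^ (2 * q) + u ^ 2 = b ^ 2 := by rw [← hb, CharTwo.add_sq, ← pow_mul, mul_comm]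
  rw [hb, ha, h2q, pow_succ]
  linear_combination u * hb + b * ha

theorem stmt_11_general (e : ℕ)
    (q s : ℕ) (hq : q = 2 ^ e)
    (F E : Type) [Field F] [Fintype F] [Field E]
    (hF : Fintype.card F = q)
    (ι : F →+* E) (δ : F) (ε : E) (hε : ε ∉ Set.range ι)
    (hεδ : ε ^ 2 + ε = ι δ)
    (Γ : E → E)
    (hΓ : ∀ u : E, Γ u
      = (u + (u ^ q + u) * ε) ^ (s + 2) + (u ^ q + u) ^ s
        + (u ^ (2 * q) + u ^ 2) * ε + u ^ (q + 1) + u ^ 2)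
    (x1 x2 : F) :
    Γ (ι x1 + ε * ι x2) = ι (x1 ^ (s + 2) + x1 * x2 + x2 ^ s) := by
  subst hq
  have h2 : (2 : E) = 0 := by rw [← map_ofNat ι 2, two_eq_zero_of_card_eq_two_pow hF, map_zero]
  have : CharP E 2 := CharTwo.of_one_ne_zero_of_two_eq_zero one_ne_zero h2
  have hεq : ε ^ 2 ^ e = ε + 1 := hF ▸ pow_card_eq_add_one_of_sq_add_self_mem_range hF ι hε hεδ
  have hfix (x : F) : ι x ^ 2 ^ e = ι x := by rw [← map_pow, ← hF, FiniteField.pow_card]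
  have hu : (ι x1 + ε * ι x2) ^ 2 ^ e = ι x1 + (ε + 1) * ι x2 := by
    rw [add_pow_char_pow, mul_pow, hεq, hfix, hfix]
  rw [hΓ, bt_form_eq s (a := ι x1) (b := ι x2)]
  · simp only [map_add, map_mul, map_pow]
  · linear_combination hu + (ι x1 + ε * ι x2) * h2
  · linear_combination ε * ι x2 * h2

/-- Evaluation of the function `Γ_ε` of the BT variety on `ι x1 + ε ι x2`:
it lands in the subfield `F_q` with value `x1^{s+2} + x1 x2 + x2^s`. -/
theorem stmt_11 (e : ℕ) (he : Odd e) (he3 : 3 ≤ e)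
    (q s : ℕ) (hq : q = 2 ^ e) (hs : s = 2 ^ ((e + 1) / 2))
    (F E : Type) [Field F] [Fintype F] [Field E] [Fintype E]
    (hF : Fintype.card F = q) (hE : Fintype.card E = q ^ 2)
    (ι : F →+* E) (δ : F) (ε : E) (hε : ε ∉ Set.range ι)
    (hεδ : ε ^ 2 + ε = ι δ)
    (Γ : E → E)
    (hΓ : ∀ u : E, Γ u
      = (u + (u ^ q + u) * ε) ^ (s + 2) + (u ^ q + u) ^ s
        + (u ^ (2 * q) + u ^ 2) * ε + u ^ (q + 1) + u ^ 2)
    (x1 x2 : F) :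
    Γ (ι x1 + ε * ι x2) = ι (x1 ^ (s + 2) + x1 * x2 + x2 ^ s) :=
  stmt_11_general e q s hq F E hF ι δ ε hε hεδ Γ hΓ x1 x2
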